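/- Let K ⊆ ℝⁿ be compact and convex, F : K → ℝⁿ continuous and monotone, and γ ∈ (0, 1/L] where L is a Lipschitz constant of F. Define the extragradient iteration x̄ᵗ = P_K(xᵗ − γF(xᵗ)), x^{t+1} = P_K(xᵗ − γF(x̄ᵗ)). If x* solves VI(F, K), then the sequence satisfies ‖x^{t+1} − x*‖² ≤ ‖xᵗ − x*‖² − (1 − γ²L²)‖xᵗ − x̄ᵗ‖². -/

import Mathlib

/-! The nearest-point property of `x⁺ = P (x - γ F x̄)`, tested at `x*`, gives
`‖x⁺ - x*‖² ≤ ‖x - γ F x̄ - x*‖² - ‖x - γ F x̄ - x⁺‖²`. Expanding, the right side is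
`‖x - x*‖² - ‖x - x̄‖² - ‖x⁺ - x̄‖²` plus three cross terms: the variational inequality of
`x̄ = P (x - γ F x)` tested at `x⁺` (nonpositive), `-2γ⟪F x̄, x̄ - x*⟫` (nonpositive by
monotonicity, since `x*` solves the VI), and `2γ⟪F x - F x̄, x⁺ - x̄⟫`, which the Lipschitz bound
and Young's inequality control by `γ²L²‖x - x̄‖² + ‖x⁺ - x̄‖²`. -/

open scoped RealInnerProductSpace

section

variable {E : Type*} [NormedAddCommGroup E] [InnerProductSpace ℝ E]

theorem Convex.inner_sub_nonpos_of_forall_norm_sub_le {K : Set E} (hK : Convex ℝ K)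
    {z p y : E} (hp : p ∈ K) (hmin : ∀ w ∈ K, ‖z - p‖ ≤ ‖z - w‖) (hy : y ∈ K) :
    ⟪z - p, y - p⟫ ≤ 0 := by
  have : Nonempty K := ⟨⟨p, hp⟩⟩
  have hbdd : BddBelow (Set.range fun w : K => ‖z - w‖) :=
    ⟨0, Set.forall_mem_range.2 fun _ => norm_nonneg _⟩
  have hinf : ‖z - p‖ = ⨅ w : K, ‖z - w‖ :=
    le_antisymm (le_ciInf fun w => hmin w w.2) (ciInf_le hbdd ⟨p, hp⟩)
  exact (norm_eq_iInf_iff_real_inner_le_zero hK hp).mp hinf y hy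

theorem Convex.norm_sub_sq_add_norm_sub_sq_le_of_forall_norm_sub_le {K : Set E}
    (hK : Convex ℝ K) {z p y : E} (hp : p ∈ K) (hmin : ∀ w ∈ K, ‖z - p‖ ≤ ‖z - w‖)
    (hy : y ∈ K) : ‖p - y‖ ^ 2 + ‖z - p‖ ^ 2 ≤ ‖z - y‖ ^ 2 := by
  have hvi := hK.inner_sub_nonpos_of_forall_norm_sub_le hp hmin hy
  have hsplit : z - y = (z - p) + (p - y) := by abel
  rw [hsplit, norm_add_sq_real, ← neg_sub y p, inner_neg_right]
  linarith

theorem extragradient_identity (x xb xp xs g gb : E) (γ : ℝ) :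
    ‖x - γ • gb - xs‖ ^ 2 - ‖x - γ • gb - xp‖ ^ 2 =
      ‖x - xs‖ ^ 2 - ‖x - xb‖ ^ 2 - ‖xp - xb‖ ^ 2 + 2 * ⟪x - γ • g - xb, xp - xb⟫
        + 2 * ⟪γ • (g - gb), xp - xb⟫ - 2 * (γ * ⟪gb, xb - xs⟫) := by
  simp only [← real_inner_self_eq_norm_sq, inner_sub_left, inner_sub_right,
    real_inner_smul_right, real_inner_smul_left]
  rw [real_inner_comm x xs, real_inner_comm x gb, real_inner_comm x xp, real_inner_comm x xb,
    real_inner_comm xp xb, real_inner_comm gb xs, real_inner_comm gb xp]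
  ring

theorem norm_sub_sq_le_of_extragradient_step {x xb xp xs g gb : E} {γ c : ℝ}
    (hproj : ‖xp - xs‖ ^ 2 + ‖x - γ • gb - xp‖ ^ 2 ≤ ‖x - γ • gb - xs‖ ^ 2)
    (hvi : ⟪x - γ • g - xb, xp - xb⟫ ≤ 0) (hgap : 0 ≤ γ * ⟪gb, xb - xs⟫)
    (hlip : ‖γ • (g - gb)‖ ≤ c * ‖x - xb‖) :
    ‖xp - xs‖ ^ 2 ≤ ‖x - xs‖ ^ 2 - (1 - c ^ 2) * ‖x - xb‖ ^ 2 := by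
  have hcross : 2 * ⟪γ • (g - gb), xp - xb⟫ ≤ c ^ 2 * ‖x - xb‖ ^ 2 + ‖xp - xb‖ ^ 2 :=
    calc 2 * ⟪γ • (g - gb), xp - xb⟫
        ≤ 2 * (c * ‖x - xb‖) * ‖xp - xb‖ := by
          rw [mul_assoc]
          gcongr
          exact (real_inner_le_norm _ _).trans (by gcongr)
      _ ≤ c ^ 2 * ‖x - xb‖ ^ 2 + ‖xp - xb‖ ^ 2 :=
          (two_mul_le_add_sq _ _).trans_eq (by ring)
  linarith [extragradient_identity x xb xp xs g gb γ]

end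

theorem extragradient_fejer_estimate_general {n : ℕ}
    (K : Set (EuclideanSpace ℝ (Fin n)))
    (F P : EuclideanSpace ℝ (Fin n) → EuclideanSpace ℝ (Fin n))
    (hcv : Convex ℝ K)
    (hmono : ∀ x ∈ K, ∀ y ∈ K, 0 ≤ (inner ℝ (F x - F y) (x - y) : ℝ))
    (L : ℝ)
    (hlip : ∀ x ∈ K, ∀ y ∈ K, ‖F x - F y‖ ≤ L * ‖x - y‖)
    (γ : ℝ) (hγ0 : 0 < γ)
    (hP : ∀ z, P z ∈ K ∧ ∀ y ∈ K, ‖z - P z‖ ≤ ‖z - y‖)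
    (xstar : EuclideanSpace ℝ (Fin n)) (hxstar : xstar ∈ K)
    (hsol : ∀ x ∈ K, 0 ≤ (inner ℝ (F xstar) (x - xstar) : ℝ))
    (xt : EuclideanSpace ℝ (Fin n)) (hxt : xt ∈ K) :
    ‖P (xt - γ • F (P (xt - γ • F xt))) - xstar‖ ^ 2 ≤
      ‖xt - xstar‖ ^ 2 -
        (1 - γ ^ 2 * L ^ 2) * ‖xt - P (xt - γ • F xt)‖ ^ 2 := by
  set xb := P (xt - γ • F xt)
  obtain ⟨hxb, hxb_min⟩ := hP (xt - γ • F xt)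
  obtain ⟨hxp, hxp_min⟩ := hP (xt - γ • F xb)
  have hgap : 0 ≤ ⟪F xb, xb - xstar⟫ := by
    have hm := hmono xb hxb xstar hxstar
    rw [inner_sub_left] at hm
    linarith [hsol xb hxb]
  rw [← mul_pow]
  refine norm_sub_sq_le_of_extragradient_step
    (hcv.norm_sub_sq_add_norm_sub_sq_le_of_forall_norm_sub_le hxp hxp_min hxstar)
    (hcv.inner_sub_nonpos_of_forall_norm_sub_le hxb hxb_min hxp) (mul_nonneg hγ0.le hgap) ?_
  rw [norm_smul, Real.norm_of_nonneg hγ0.le, mul_assoc]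
  gcongr
  exact hlip xt hxt xb hxb

/-- Fejér-monotonicity estimate for one step of the extragradient (modified
projection) method: with γ ∈ (0, 1/L], monotone L-Lipschitz F, and x* a VI
solution, ‖x⁺ − x*‖² ≤ ‖x − x*‖² − (1 − γ²L²)‖x − x̄‖². -/
theorem extragradient_fejer_estimate {n : ℕ}
    (K : Set (EuclideanSpace ℝ (Fin n)))
    (F P : EuclideanSpace ℝ (Fin n) → EuclideanSpace ℝ (Fin n))
    (hcp : IsCompact K) (hcv : Convex ℝ K)
    (hFc : ContinuousOn F K)
    (hmono : ∀ x ∈ K, ∀ y ∈ K, 0 ≤ (inner ℝ (F x - F y) (x - y) : ℝ))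
    (L : ℝ) (hL : 0 < L)
    (hlip : ∀ x ∈ K, ∀ y ∈ K, ‖F x - F y‖ ≤ L * ‖x - y‖)
    (γ : ℝ) (hγ0 : 0 < γ) (hγL : γ ≤ 1 / L)
    (hP : ∀ z, P z ∈ K ∧ ∀ y ∈ K, ‖z - P z‖ ≤ ‖z - y‖)
    (xstar : EuclideanSpace ℝ (Fin n)) (hxstar : xstar ∈ K)
    (hsol : ∀ x ∈ K, 0 ≤ (inner ℝ (F xstar) (x - xstar) : ℝ))
    (xt : EuclideanSpace ℝ (Fin n)) (hxt : xt ∈ K) :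
    ‖P (xt - γ • F (P (xt - γ • F xt))) - xstar‖ ^ 2 ≤
      ‖xt - xstar‖ ^ 2 -
        (1 - γ ^ 2 * L ^ 2) * ‖xt - P (xt - γ • F xt)‖ ^ 2 :=
  extragradient_fejer_estimate_general K F P hcv hmono L hlip γ hγ0 hP xstar hxstar hsol xt hxt
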